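/- arXiv:1001.2378 — 12 statements merged into one kernel-verified Lean document; each statement's English description precedes it below -/
import Mathlib

section
/- If X = {1,2,3} and for each i ∈ X, X_i is the integral connectivity structure on X whose only non-trivial connected set is X\{i}, and B is the integral connectivity structure whose only non-trivial connected set is X itself, then B ∧ (⋁_i X_i) = B while ⋁_i (B ∧ X_i) is the discrete integral structure; hence the lattice of integral connectivity structures on a three-element set is not distributive. -/
def IsConnStruct {X : Type*} (κ : Set (Set X)) : Prop :=
  ∅ ∈ κ ∧ ∀ I : Set (Set X), I ⊆ κ → (⋂₀ I).Nonempty → ⋃₀ I ∈ κ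

def IsIntConnStruct {X : Type*} (κ : Set (Set X)) : Prop :=
  IsConnStruct κ ∧ ∀ x : X, {x} ∈ κ

def connGen {X : Type*} (A : Set (Set X)) : Set (Set X) :=
  ⋂₀ {κ : Set (Set X) | IsConnStruct κ ∧ A ⊆ κ}

def connGenI {X : Type*} (A : Set (Set X)) : Set (Set X) :=
  ⋂₀ {κ : Set (Set X) | IsIntConnStruct κ ∧ A ⊆ κ}

/-- the discrete integral connectivity structure: the empty set and the singletons -/
def discreteI (X : Type*) : Set (Set X) := {s : Set X | s = ∅ ∨ ∃ x : X, s = {x}}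

/-- `XI i` : only non-trivial connected set is `X \ {i}` -/
def XI (i : Fin 3) : Set (Set (Fin 3)) := discreteI (Fin 3) ∪ {{j : Fin 3 | j ≠ i}}

/-- the Borromean structure : only non-trivial connected set is `X` itself -/
def BB : Set (Set (Fin 3)) := discreteI (Fin 3) ∪ {Set.univ}

lemma discreteI_isIntConnStruct (X : Type*) : IsIntConnStruct (discreteI X) := by
  refine ⟨⟨Or.inl rfl, ?_⟩, fun x => Or.inr ⟨x, rfl⟩⟩
  intro I hI ⟨x, hx⟩
  simp only [Set.mem_sInter] at hx
  have hsub : ⋃₀ I ⊆ {x} := by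
    rintro y ⟨s, hs, hy⟩
    rcases hI hs with h | ⟨z, rfl⟩
    · exact absurd (hx s hs) (h ▸ id)
    · have : x = z := hx _ hs
      simpa [this] using hy
  rcases Set.subset_singleton_iff_eq.mp hsub with h | h
  · exact Or.inl h
  · exact Or.inr ⟨x, h⟩

lemma connGenI_isIntConnStruct {X : Type*} (A : Set (Set X)) :
    IsIntConnStruct (connGenI A) := by
  refine ⟨⟨?_, ?_⟩, ?_⟩
  · intro κ hκ; exact hκ.1.1.1
  · intro I hI hne κ hκ
    exact hκ.1.1.2 I (fun s hs => hI hs κ hκ) hne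
  · intro x κ hκ; exact hκ.1.2 x

lemma subset_connGenI {X : Type*} (A : Set (Set X)) : A ⊆ connGenI A :=
  fun s hs κ hκ => hκ.2 hs

lemma univ_not_mem_discreteI : Set.univ ∉ discreteI (Fin 3) := by
  rintro (h | ⟨x, h⟩)
  · exact absurd (h ▸ Set.mem_univ 0) (by simp)
  · have h0 : (0 : Fin 3) ∈ ({x} : Set (Fin 3)) := h ▸ Set.mem_univ 0
    have h1 : (1 : Fin 3) ∈ ({x} : Set (Fin 3)) := h ▸ Set.mem_univ 1
    simp only [Set.mem_singleton_iff] at h0 h1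
    exact absurd (h0.trans h1.symm) (by decide)

lemma BB_inter_XI (i : Fin 3) : BB ∩ XI i = discreteI (Fin 3) := by
  ext s
  constructor
  · rintro ⟨hB | hB, hX | hX⟩
    · exact hB
    · exact hB
    · exact hX
    · simp only [Set.mem_singleton_iff] at hB hX
      exfalso
      have : i ∈ ({j : Fin 3 | j ≠ i} : Set (Fin 3)) := by
        rw [← hX, hB]; exact Set.mem_univ i
      simp at this
  · intro h; exact ⟨Or.inl h, Or.inl h⟩

/-- non-distributivity of the lattice of integral connectivity structures
on a three-element set: `B ∧ (⋁ᵢ Xᵢ) = B` but `⋁ᵢ (B ∧ Xᵢ)` is discrete.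
(Meet of structures is intersection, join of a family is the generated structure.) -/
theorem intConnStruct_not_distributive :
    BB ∩ connGenI (XI 0 ∪ XI 1 ∪ XI 2) = BB ∧
    connGenI ((BB ∩ XI 0) ∪ (BB ∩ XI 1) ∪ (BB ∩ XI 2)) = discreteI (Fin 3) ∧
    BB ∩ connGenI (XI 0 ∪ XI 1 ∪ XI 2) ≠
      connGenI ((BB ∩ XI 0) ∪ (BB ∩ XI 1) ∪ (BB ∩ XI 2)) := by
  have h2 : connGenI ((BB ∩ XI 0) ∪ (BB ∩ XI 1) ∪ (BB ∩ XI 2)) = discreteI (Fin 3) := by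
    have hA : (BB ∩ XI 0) ∪ (BB ∩ XI 1) ∪ (BB ∩ XI 2) = discreteI (Fin 3) := by
      rw [BB_inter_XI, BB_inter_XI, BB_inter_XI, Set.union_self, Set.union_self]
    rw [hA]
    apply subset_antisymm
    · intro s hs
      exact hs _ ⟨discreteI_isIntConnStruct _, subset_rfl⟩
    · exact subset_connGenI _
  have h1 : BB ∩ connGenI (XI 0 ∪ XI 1 ∪ XI 2) = BB := by
    apply Set.inter_eq_left.mpr
    rintro s (hs | hs)
    · -- discreteI ⊆ connGenI
      rcases hs with h | ⟨x, rfl⟩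
      · exact h ▸ (connGenI_isIntConnStruct _).1.1
      · exact (connGenI_isIntConnStruct _).2 x
    · -- s = univ
      simp only [Set.mem_singleton_iff] at hs
      subst hs
      have ha : ({j : Fin 3 | j ≠ 0} : Set (Fin 3)) ∈ connGenI (XI 0 ∪ XI 1 ∪ XI 2) :=
        subset_connGenI _ (Or.inl (Or.inl (Or.inr rfl)))
      have hb : ({j : Fin 3 | j ≠ 1} : Set (Fin 3)) ∈ connGenI (XI 0 ∪ XI 1 ∪ XI 2) :=
        subset_connGenI _ (Or.inl (Or.inr (Or.inr rfl)))
      have := (connGenI_isIntConnStruct (XI 0 ∪ XI 1 ∪ XI 2)).1.2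
        {{j : Fin 3 | j ≠ 0}, {j : Fin 3 | j ≠ 1}}
        (by rintro t (rfl | rfl); exacts [ha, hb])
        ⟨2, by simp only [Set.sInter_insert, Set.sInter_singleton, Set.mem_inter_iff, Set.mem_setOf_eq]; decide⟩
      have heq : ⋃₀ ({{j : Fin 3 | j ≠ 0}, {j : Fin 3 | j ≠ 1}} : Set (Set (Fin 3)))
          = Set.univ := by
        ext x; simp only [Set.sUnion_insert, Set.sUnion_singleton, Set.mem_union,
          Set.mem_setOf_eq, Set.mem_univ, iff_true]
        by_cases h : x = 0
        · right; rw [h]; decide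
        · exact Or.inl h
      rwa [heq] at this
  refine ⟨h1, h2, ?_⟩
  rw [h1, h2]
  intro h
  exact univ_not_mem_discreteI (h ▸ Or.inr rfl)
end

section
/- Let X be a set, A a collection of subsets of X, (Y,Y') a connectivity space, and f : X → Y a function. Then f maps every set in the connectivity structure [A]₀ generated by A into a connected set of Y if and only if f(A) is connected in Y for every A ∈ A. -/
/-- `f` maps every member of the generated structure `[A]₀` to a
connected set of `Y` iff it does so on the generators. -/
theorem connGen_morphism_iff {X Y : Type*} (A : Set (Set X)) (κY : Set (Set Y))
    (hY : IsConnStruct κY) (f : X → Y) :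
    (∀ K ∈ connGen A, f '' K ∈ κY) ↔ (∀ a ∈ A, f '' a ∈ κY) := by
  constructor
  · intro h a ha
    exact h a (fun κ hκ => hκ.2 ha)
  · intro h K hK
    have hmem : {K : Set X | f '' K ∈ κY} ∈ {κ : Set (Set X) | IsConnStruct κ ∧ A ⊆ κ} := by
      refine ⟨⟨by simpa using hY.1, ?_⟩, h⟩
      intro I hI ⟨x, hx⟩
      have : f '' ⋃₀ I = ⋃₀ ((f '' ·) '' I) := by
        rw [Set.image_sUnion, Set.sUnion_image]
      simp only [Set.mem_setOf_eq, this]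
      refine hY.2 _ ?_ ⟨f x, ?_⟩
      · rintro _ ⟨S, hS, rfl⟩; exact hI hS
      · rintro _ ⟨S, hS, rfl⟩
        exact ⟨x, hx S hS, rfl⟩
    exact hK _ hmem
end

section
/- Let X be a set and A a collection of subsets of X. Define the operator Φ on collections of subsets of X by Φ(U) = {∅} ∪ { ⋃E : E ⊆ U, ⋂E ≠ ∅ }, and define Φ^α by transfinite iteration. Then Φ^(ω+1)(A) is a connectivity structure, and equals the connectivity structure [A]₀ generated by A; moreover Φ^α(A) = [A]₀ for all ordinals α ≥ ω+1, where ω is the first infinite ordinal. -/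
/-- the operator `Φ` -/
def PhiOp {X : Type} (U : Set (Set X)) : Set (Set X) :=
  {∅} ∪ {s : Set X | ∃ E ⊆ U, (⋂₀ E).Nonempty ∧ s = ⋃₀ E}

/-- transfinite iteration of `Φ` starting from `A` -/
noncomputable def PhiIter {X : Type} (A : Set (Set X)) (o : Ordinal.{0}) : Set (Set X) :=
  Ordinal.limitRecOn o A (fun _ ih => PhiOp ih)
    (fun o _ ih => {s : Set X | ∃ b : Ordinal, ∃ h : b < o, s ∈ ih b h})

lemma phiIter_zero {X : Type} (A : Set (Set X)) : PhiIter A 0 = A :=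
  Ordinal.limitRecOn_zero ..

lemma phiIter_succ {X : Type} (A : Set (Set X)) (o : Ordinal) :
    PhiIter A (Order.succ o) = PhiOp (PhiIter A o) :=
  Ordinal.limitRecOn_succ ..

lemma phiIter_limit {X : Type} (A : Set (Set X)) {o : Ordinal} (h : Order.IsSuccLimit o) :
    PhiIter A o = {s : Set X | ∃ b : Ordinal, ∃ _ : b < o, s ∈ PhiIter A b} :=
  Ordinal.limitRecOn_limit _ _ _ _ h

lemma subset_phiOp {X : Type} (U : Set (Set X)) : U ⊆ PhiOp U := by
  intro s hs
  rcases eq_or_ne s ∅ with rfl | hne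
  · exact Or.inl rfl
  · exact Or.inr ⟨{s}, by simpa using hs, by simpa using Set.nonempty_iff_ne_empty.2 hne,
      by simp⟩

lemma phiOp_mono {X : Type} {U V : Set (Set X)} (h : U ⊆ V) : PhiOp U ⊆ PhiOp V := by
  rintro s (hs | ⟨E, hE, hne, rfl⟩)
  · exact Or.inl hs
  · exact Or.inr ⟨E, hE.trans h, hne, rfl⟩

lemma phiOp_of_connStruct {X : Type} {κ : Set (Set X)} (h : IsConnStruct κ) :
    PhiOp κ ⊆ κ := by
  rintro s (rfl | ⟨E, hE, hne, rfl⟩)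
  · exact h.1
  · exact h.2 E hE hne

lemma phiIter_mono {X : Type} (A : Set (Set X)) :
    ∀ α : Ordinal, ∀ β ≤ α, PhiIter A β ⊆ PhiIter A α := by
  intro α
  induction α using Ordinal.limitRecOn with
  | zero => intro β hβ; simp [nonpos_iff_eq_zero.1 hβ]
  | add_one o ih =>
    rw [Ordinal.add_one_eq_succ]
    intro β hβ
    rcases Order.le_succ_iff_eq_or_le.1 hβ with rfl | h
    · rfl
    · rw [phiIter_succ]
      exact (ih β h).trans (subset_phiOp _)
  | limit o ho ih =>
    intro β hβ
    rcases eq_or_lt_of_le hβ with rfl | h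
    · rfl
    · rw [phiIter_limit A ho]
      intro s hs
      exact ⟨β, h, hs⟩

lemma phiIter_subset_connStruct {X : Type} {A κ : Set (Set X)} (hκ : IsConnStruct κ)
    (hA : A ⊆ κ) : ∀ α : Ordinal, PhiIter A α ⊆ κ := by
  intro α
  induction α using Ordinal.limitRecOn with
  | zero => rw [phiIter_zero]; exact hA
  | add_one o ih =>
    rw [Ordinal.add_one_eq_succ, phiIter_succ]
    exact (phiOp_mono ih).trans (phiOp_of_connStruct hκ)
  | limit o ho ih =>
    rw [phiIter_limit A ho]
    rintro s ⟨b, hb, hs⟩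
    exact ih b hb hs

/-- `Φ^ω A` is closed under binary unions with nonempty intersection. -/
lemma phiIter_omega_union {X : Type} (A : Set (Set X)) {u v : Set X}
    (hu : u ∈ PhiIter A Ordinal.omega0) (hv : v ∈ PhiIter A Ordinal.omega0)
    (hne : (u ∩ v).Nonempty) : u ∪ v ∈ PhiIter A Ordinal.omega0 := by
  rw [phiIter_limit A Ordinal.isSuccLimit_omega0] at hu hv ⊢
  obtain ⟨m, hm, hu⟩ := hu
  obtain ⟨n, hn, hv⟩ := hv
  refine ⟨Order.succ (max m n), Ordinal.isSuccLimit_omega0.succ_lt (max_lt hm hn), ?_⟩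
  rw [phiIter_succ]
  refine Or.inr ⟨{u, v}, ?_, ?_, by simp⟩
  · rintro s (rfl | rfl)
    · exact phiIter_mono A _ m (le_max_left _ _) hu
    · exact phiIter_mono A _ n (le_max_right _ _) hv
  · simpa [Set.sInter_pair] using hne

lemma isConnStruct_phiIter_omega_succ {X : Type} (A : Set (Set X)) :
    IsConnStruct (PhiIter A (Ordinal.omega0 + 1)) := by
  rw [Ordinal.add_one_eq_succ, phiIter_succ]
  constructor
  · exact Or.inl rfl
  · intro I hI ⟨x, hx⟩
    -- each e ∈ I contains x, hence is a nonempty union of a family in Φ^ω with common point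
    have key : ∀ e ∈ I, ∃ F : Set (Set X), F ⊆ PhiIter A Ordinal.omega0 ∧
        (⋂₀ F).Nonempty ∧ e = ⋃₀ F := by
      intro e he
      rcases hI he with h | h
      · exfalso
        have he' : e = ∅ := h
        rw [he'] at he
        simpa using hx ∅ he
      · exact h
    choose F hF hFne hFeq using key
    -- pick f_e ∈ F e containing x
    have keyf : ∀ e (he : e ∈ I), ∃ f ∈ F e he, x ∈ f := by
      intro e he
      have : x ∈ ⋃₀ F e he := by rw [← hFeq e he]; exact hx e he
      obtain ⟨f, hf, hxf⟩ := this
      exact ⟨f, hf, hxf⟩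
    choose f hfF hxf using keyf
    refine Or.inr ⟨{g | ∃ e : Set X, ∃ he : e ∈ I, ∃ f' ∈ F e he, g = f' ∪ f e he}, ?_, ?_, ?_⟩
    · rintro g ⟨e, he, f', hf', rfl⟩
      obtain ⟨y, hy⟩ := hFne e he
      exact phiIter_omega_union A (hF e he hf') (hF e he (hfF e he))
        ⟨y, hy _ hf', hy _ (hfF e he)⟩
    · refine ⟨x, ?_⟩
      rintro g ⟨e, he, f', hf', rfl⟩
      exact Or.inr (hxf e he)
    · ext z
      simp only [Set.mem_sUnion, Set.mem_setOf_eq]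
      constructor
      · rintro ⟨e, he, hz⟩
        rw [hFeq e he] at hz
        obtain ⟨f', hf', hz⟩ := hz
        exact ⟨f' ∪ f e he, ⟨e, he, f', hf', rfl⟩, Or.inl hz⟩
      · rintro ⟨g, ⟨e, he, f', hf', rfl⟩, hz⟩
        refine ⟨e, he, ?_⟩
        rw [hFeq e he]
        rcases hz with hz | hz
        · exact ⟨f', hf', hz⟩
        · exact ⟨f e he, hfF e he, hz⟩

/-- `Φ^(ω+1)(A)` is a connectivity structure equal to `[A]₀`, and
`Φ^α(A) = [A]₀` for all `α ≥ ω + 1`. -/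
theorem phiIter_omega_add_one {X : Type} (A : Set (Set X)) :
    IsConnStruct (PhiIter A (Ordinal.omega0 + 1)) ∧
    PhiIter A (Ordinal.omega0 + 1) = connGen A ∧
    ∀ α : Ordinal, Ordinal.omega0 + 1 ≤ α → PhiIter A α = connGen A := by
  have hconn := isConnStruct_phiIter_omega_succ A
  have hA : A ⊆ PhiIter A (Ordinal.omega0 + 1) := by
    have h := phiIter_mono A (Ordinal.omega0 + 1) 0 (zero_le (a := Ordinal.omega0 + 1))
    rwa [phiIter_zero] at h
  have hsub : ∀ α : Ordinal, PhiIter A α ⊆ connGen A := by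
    intro α s hs κ hκ
    exact phiIter_subset_connStruct hκ.1 hκ.2 α hs
  have heq : PhiIter A (Ordinal.omega0 + 1) = connGen A := by
    apply Set.Subset.antisymm (hsub _)
    exact Set.sInter_subset_of_mem ⟨hconn, hA⟩
  refine ⟨hconn, heq, fun α hα => ?_⟩
  apply Set.Subset.antisymm (hsub _)
  rw [← heq]
  exact phiIter_mono A α _ hα
end

section
/- Every finite connectivity structure on a set X equals the connectivity structure generated by its irreducible connected subsets, and the set of irreducible connected subsets is contained in every generating family; thus a finite connectivity space is characterized by its irreducible connected subsets, which form the minimal generating set. -/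
/-- the set of irreducible (nonempty) connected subsets -/
def IrrSet {X : Type*} (κ : Set (Set X)) : Set (Set X) :=
  {K : Set X | K ∈ κ ∧ K.Nonempty ∧ K ∉ connGen (κ \ {K})}

theorem connGen_isConnStruct' {X : Type*} (A : Set (Set X)) : IsConnStruct (connGen A) := by
  constructor
  · intro κ hκ; exact hκ.1.1
  · intro I hI hne κ' hκ'
    exact hκ'.1.2 I (fun s hs => hI hs κ' hκ') hne

theorem subset_connGen' {X : Type*} (A : Set (Set X)) : A ⊆ connGen A :=
  fun s hs _κ hκ => hκ.2 hs

theorem connGen_le' {X : Type*} {A κ : Set (Set X)} (h : IsConnStruct κ) (hA : A ⊆ κ) :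
    connGen A ⊆ κ := fun s hs => hs κ ⟨h, hA⟩

theorem connGen_mono' {X : Type*} {A B : Set (Set X)} (hAB : A ⊆ B) :
    connGen A ⊆ connGen B := fun s hs κ hκ => hs κ ⟨hκ.1, hAB.trans hκ.2⟩

/-- a finite connectivity structure is generated by its irreducible
connected subsets, and these belong to every generating family. -/
theorem finite_connStruct_generated_by_irreducibles {X : Type*} [Finite X]
    (κ : Set (Set X)) (h : IsConnStruct κ) :
    connGen (IrrSet κ) = κ ∧ ∀ A : Set (Set X), connGen A = κ → IrrSet κ ⊆ A := by
  have main : ∀ n : ℕ, ∀ K ∈ κ, K.ncard ≤ n → K ∈ connGen (IrrSet κ) := by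
    intro n
    induction n with
    | zero =>
      intro K hK hcard
      have : K = ∅ := (Set.ncard_eq_zero K.toFinite).mp (Nat.le_zero.mp hcard)
      rw [this]
      exact (connGen_isConnStruct' _).1
    | succ n ih =>
      intro K hK hcard
      by_cases hirr : K ∈ IrrSet κ
      · exact subset_connGen' _ hirr
      · rcases eq_or_ne K ∅ with rfl | hne
        · exact (connGen_isConnStruct' _).1
        have hKne : K.Nonempty := Set.nonempty_iff_ne_empty.mpr hne
        have hKg : K ∈ connGen (κ \ {K}) := by
          by_contra h'
          exact hirr ⟨hK, hKne, h'⟩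
        set B := connGen (IrrSet κ) with hB
        set D := B ∪ {S : Set X | ¬ S ⊆ K} with hDdef
        have hD : IsConnStruct D := by
          constructor
          · exact Or.inl (connGen_isConnStruct' _).1
          · intro I hI hIne
            by_cases hU : ⋃₀ I ⊆ K
            · left
              refine (connGen_isConnStruct' (IrrSet κ)).2 I (fun S hS => ?_) hIne
              rcases hI hS with h1 | h2
              · exact h1
              · exact absurd ((Set.subset_sUnion_of_mem hS).trans hU) h2
            · exact Or.inr hU
        have hsubD : κ \ {K} ⊆ D := by
          intro S hS
          by_cases hSK : S ⊆ K
          · left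
            have hss : S ⊂ K := ssubset_of_subset_of_ne hSK hS.2
            have : S.ncard < K.ncard := Set.ncard_lt_ncard hss K.toFinite
            exact ih S hS.1 (by omega)
          · exact Or.inr hSK
        have hKD : K ∈ D := connGen_le' hD hsubD hKg
        rcases hKD with h1 | h2
        · exact h1
        · exact absurd (subset_refl K) h2
  have hsub : κ ⊆ connGen (IrrSet κ) := fun K hK => main K.ncard K hK le_rfl
  refine ⟨subset_antisymm (connGen_le' h fun K hK => hK.1) hsub, ?_⟩
  intro A hA K hK
  by_contra hKA
  have hAsub : A ⊆ κ \ {K} := fun S hS =>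
    ⟨hA ▸ subset_connGen' A hS, fun h' => hKA (h' ▸ hS)⟩
  have hκsub : κ ⊆ connGen (κ \ {K}) := by
    have := connGen_mono' hAsub
    rwa [hA] at this
  exact hK.2.2 (hκsub hK.1)
end

section
/- Let X₁, X₂ be integral connectivity spaces and Y a connectivity space. A function f : X₁ × X₂ → Y is partially connecting (i.e., f(x₁,−) and f(−,x₂) map connected sets to connected sets for every x₁, x₂) if and only if f maps every set in the connectivity structure generated by the products K₁ × K₂ of connected sets to a connected set of Y. In particular it suffices to check that f(K₁ × K₂) is connected in Y for all connected K₁ ⊆ X₁, K₂ ⊆ X₂. -/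
/-- the connectivity structure of the tensor product `X₁ ⊠ X₂` : the integral
structure generated by products of connected sets -/
def tensorStruct {X₁ X₂ : Type*} (κ₁ : Set (Set X₁)) (κ₂ : Set (Set X₂)) :
    Set (Set (X₁ × X₂)) :=
  connGenI {s : Set (X₁ × X₂) | ∃ K₁ ∈ κ₁, ∃ K₂ ∈ κ₂, s = K₁ ×ˢ K₂}

/-- `f : X₁ × X₂ → Y` is partially connecting iff it is a connectivity
morphism on the tensor product; equivalently iff `f(K₁ × K₂)` is connected for all
connected `K₁, K₂`. -/
theorem partially_connecting_iff_tensor_morphism {X₁ X₂ Y : Type*}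
    (κ₁ : Set (Set X₁)) (κ₂ : Set (Set X₂)) (κY : Set (Set Y))
    (h₁ : IsIntConnStruct κ₁) (h₂ : IsIntConnStruct κ₂) (hY : IsConnStruct κY)
    (f : X₁ × X₂ → Y) :
    (((∀ x₁ : X₁, ∀ K ∈ κ₂, (fun x₂ => f (x₁, x₂)) '' K ∈ κY) ∧
      (∀ x₂ : X₂, ∀ K ∈ κ₁, (fun x₁ => f (x₁, x₂)) '' K ∈ κY)) ↔
      (∀ S ∈ tensorStruct κ₁ κ₂, f '' S ∈ κY)) ∧
    (((∀ x₁ : X₁, ∀ K ∈ κ₂, (fun x₂ => f (x₁, x₂)) '' K ∈ κY) ∧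
      (∀ x₂ : X₂, ∀ K ∈ κ₁, (fun x₁ => f (x₁, x₂)) '' K ∈ κY)) ↔
      (∀ K₁ ∈ κ₁, ∀ K₂ ∈ κ₂, f '' (K₁ ×ˢ K₂) ∈ κY)) := by
  -- Step A: partially connecting ⇒ products connected
  have stepA : ((∀ x₁ : X₁, ∀ K ∈ κ₂, (fun x₂ => f (x₁, x₂)) '' K ∈ κY) ∧
      (∀ x₂ : X₂, ∀ K ∈ κ₁, (fun x₁ => f (x₁, x₂)) '' K ∈ κY)) →
      ∀ K₁ ∈ κ₁, ∀ K₂ ∈ κ₂, f '' (K₁ ×ˢ K₂) ∈ κY := by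
    rintro ⟨hA, hB⟩ K₁ hK₁ K₂ hK₂
    rcases K₁.eq_empty_or_nonempty with rfl | ⟨x₁, hx₁⟩
    · simpa using hY.1
    rcases K₂.eq_empty_or_nonempty with rfl | ⟨x₂, hx₂⟩
    · simpa using hY.1
    set R : Set Y := (fun a => f (a, x₂)) '' K₁ with hR
    have hRκ : R ∈ κY := hB x₂ K₁ hK₁
    set C : X₁ → Set Y := fun y => (fun a => f (y, a)) '' K₂ ∪ R with hC
    have hCκ : ∀ y ∈ K₁, C y ∈ κY := by
      intro y hy
      have := hY.2 {(fun a => f (y, a)) '' K₂, R} ?_ ?_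
      · simpa [Set.sUnion_insert] using this
      · rintro s (rfl | rfl)
        · exact hA y K₂ hK₂
        · exact hRκ
      · refine ⟨f (y, x₂), ?_⟩
        rintro s (rfl | rfl)
        · exact ⟨x₂, hx₂, rfl⟩
        · exact ⟨y, hy, rfl⟩
    have key := hY.2 (C '' K₁) ?_ ?_
    · have heq : ⋃₀ (C '' K₁) = f '' (K₁ ×ˢ K₂) := by
        ext z
        constructor
        · rintro ⟨s, ⟨y, hy, rfl⟩, hz⟩
          rcases hz with ⟨b, hb, rfl⟩ | ⟨a, ha, rfl⟩
          · exact ⟨(y, b), ⟨hy, hb⟩, rfl⟩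
          · exact ⟨(a, x₂), ⟨ha, hx₂⟩, rfl⟩
        · rintro ⟨⟨a, b⟩, ⟨ha, hb⟩, rfl⟩
          exact ⟨C a, ⟨a, ha, rfl⟩, Or.inl ⟨b, hb, rfl⟩⟩
      rwa [heq] at key
    · rintro s ⟨y, hy, rfl⟩; exact hCκ y hy
    · refine ⟨f (x₁, x₂), ?_⟩
      rintro s ⟨y, hy, rfl⟩
      exact Or.inr ⟨x₁, hx₁, rfl⟩
  -- Step B: products connected ⇒ morphism on tensor product
  have stepB : (∀ K₁ ∈ κ₁, ∀ K₂ ∈ κ₂, f '' (K₁ ×ˢ K₂) ∈ κY) →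
      ∀ S ∈ tensorStruct κ₁ κ₂, f '' S ∈ κY := by
    intro hp S hS
    have : S ∈ {S : Set (X₁ × X₂) | f '' S ∈ κY} := by
      refine hS _ ⟨⟨⟨?_, ?_⟩, ?_⟩, ?_⟩
      · simpa using hY.1
      · intro I hI hne
        rcases hne with ⟨p, hp'⟩
        have := hY.2 ((Set.image f) '' I) ?_ ?_
        · have heq : ⋃₀ ((Set.image f) '' I) = f '' ⋃₀ I := by
            simp [Set.sUnion_image, Set.image_sUnion]
          rwa [heq] at this
        · rintro s ⟨t, ht, rfl⟩; exact hI ht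
        · exact ⟨f p, by rintro s ⟨t, ht, rfl⟩; exact ⟨p, hp' t ht, rfl⟩⟩
      · rintro ⟨a, b⟩
        have := hp {a} (h₁.2 a) {b} (h₂.2 b)
        simpa [Set.singleton_prod_singleton] using this
      · rintro s ⟨K₁, hK₁, K₂, hK₂, rfl⟩
        exact hp K₁ hK₁ K₂ hK₂
    exact this
  -- Step C: morphism on tensor product ⇒ partially connecting
  have gen_mem : ∀ K₁ ∈ κ₁, ∀ K₂ ∈ κ₂, K₁ ×ˢ K₂ ∈ tensorStruct κ₁ κ₂ := by
    intro K₁ hK₁ K₂ hK₂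
    rintro κ' ⟨_, hsub⟩
    exact hsub ⟨K₁, hK₁, K₂, hK₂, rfl⟩
  have stepC : (∀ S ∈ tensorStruct κ₁ κ₂, f '' S ∈ κY) →
      ((∀ x₁ : X₁, ∀ K ∈ κ₂, (fun x₂ => f (x₁, x₂)) '' K ∈ κY) ∧
      (∀ x₂ : X₂, ∀ K ∈ κ₁, (fun x₁ => f (x₁, x₂)) '' K ∈ κY)) := by
    intro hm
    constructor
    · intro x₁ K hK
      have := hm _ (gen_mem {x₁} (h₁.2 x₁) K hK)
      rwa [Set.singleton_prod, Set.image_image] at this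
    · intro x₂ K hK
      have := hm _ (gen_mem K hK {x₂} (h₂.2 x₂))
      rwa [Set.prod_singleton, Set.image_image] at this
  refine ⟨⟨fun h => stepB (stepA h), stepC⟩,
    ⟨stepA, fun h => stepC (stepB h)⟩⟩
end

section
/- Let f : X₁ × X₂ → Y with X₁, X₂ integral connectivity spaces and Y a connectivity space. If for every x₁ the map f(x₁,−) preserves connectedness and for every x₂ the map f(−,x₂) preserves connectedness, then for all nonempty connected K₁ ⊆ X₁ and K₂ ⊆ X₂, the image f(K₁ × K₂) is connected in Y. -/
/-- if `f` is partially connecting then images of products of nonempty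
connected sets are connected. -/
theorem partially_connecting_image_prod {X₁ X₂ Y : Type*}
    (κ₁ : Set (Set X₁)) (κ₂ : Set (Set X₂)) (κY : Set (Set Y))
    (h₁ : IsIntConnStruct κ₁) (h₂ : IsIntConnStruct κ₂) (hY : IsConnStruct κY)
    (f : X₁ × X₂ → Y)
    (hpc₁ : ∀ x₁ : X₁, ∀ K ∈ κ₂, (fun x₂ => f (x₁, x₂)) '' K ∈ κY)
    (hpc₂ : ∀ x₂ : X₂, ∀ K ∈ κ₁, (fun x₁ => f (x₁, x₂)) '' K ∈ κY) :
    ∀ K₁ ∈ κ₁, ∀ K₂ ∈ κ₂, K₁.Nonempty → K₂.Nonempty →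
      f '' (K₁ ×ˢ K₂) ∈ κY := by
  intro K₁ hK₁ K₂ hK₂ hne₁ hne₂
  obtain ⟨a₂, ha₂⟩ := hne₂
  obtain ⟨a₁, ha₁⟩ := hne₁
  set T : Set Y := (fun x₁ => f (x₁, a₂)) '' K₁ with hT
  have hTκ : T ∈ κY := hpc₂ a₂ K₁ hK₁
  -- for each x₁ ∈ K₁, the set S x₁ ∪ T is connected
  set A : X₁ → Set Y := fun x₁ => (fun x₂ => f (x₁, x₂)) '' K₂ ∪ T with hA
  have hAκ : ∀ x₁ ∈ K₁, A x₁ ∈ κY := by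
    intro x₁ hx₁
    have := hY.2 {(fun x₂ => f (x₁, x₂)) '' K₂, T}
      (by
        rintro S (rfl | rfl)
        · exact hpc₁ x₁ K₂ hK₂
        · exact hTκ)
      (by
        refine ⟨f (x₁, a₂), ?_⟩
        rintro S (rfl | rfl)
        · exact ⟨a₂, ha₂, rfl⟩
        · exact ⟨x₁, hx₁, rfl⟩)
    simpa [Set.sUnion_pair] using this
  have key := hY.2 (A '' K₁)
    (by rintro S ⟨x₁, hx₁, rfl⟩; exact hAκ x₁ hx₁)
    (by
      refine ⟨f (a₁, a₂), ?_⟩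
      rintro S ⟨x₁, hx₁, rfl⟩
      exact Or.inr ⟨a₁, ha₁, rfl⟩)
  have himg : ⋃₀ (A '' K₁) = f '' (K₁ ×ˢ K₂) := by
    ext y
    constructor
    · rintro ⟨S, ⟨x₁, hx₁, rfl⟩, hy⟩
      rcases hy with ⟨x₂, hx₂, rfl⟩ | ⟨x₁', hx₁', rfl⟩
      · exact ⟨(x₁, x₂), ⟨hx₁, hx₂⟩, rfl⟩
      · exact ⟨(x₁', a₂), ⟨hx₁', ha₂⟩, rfl⟩
    · rintro ⟨⟨x₁, x₂⟩, ⟨hx₁, hx₂⟩, rfl⟩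
      exact ⟨A x₁, ⟨x₁, hx₁, rfl⟩, Or.inl ⟨x₂, hx₂, rfl⟩⟩
  rwa [himg] at key
end

section
/- Let X and Y be integral connectivity spaces and let M be a set of connectivity morphisms from X to Y such that for every x ∈ X, the set {f(x) : f ∈ M} is connected in Y. Then for every nonempty connected K ⊆ X, the set ⋃_{f∈M} f(K) is connected in Y. -/
/-- if `M` is a set of connectivity morphisms `X → Y` whose pointwise
images `⟨M,{x}⟩` are connected, then `⟨M,K⟩ = ⋃_{f ∈ M} f(K)` is connected for every
nonempty connected `K`. -/
theorem connected_family_image {X Y : Type*} (κX : Set (Set X)) (κY : Set (Set Y))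
    (hX : IsIntConnStruct κX) (hY : IsIntConnStruct κY)
    (M : Set (X → Y)) (hM : ∀ f ∈ M, ∀ K ∈ κX, f '' K ∈ κY)
    (hx : ∀ x : X, (⋃ f ∈ M, f '' ({x} : Set X)) ∈ κY) :
    ∀ K ∈ κX, K.Nonempty → (⋃ f ∈ M, f '' K) ∈ κY := by
  rintro K hK ⟨x0, hx0⟩
  rcases M.eq_empty_or_nonempty with rfl | ⟨f0, hf0⟩
  · simpa using hY.1.1
  · set T : Set Y := ⋃ f ∈ M, f '' ({x0} : Set X) with hTdef
    have hTconn : T ∈ κY := hx x0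
    have hmemT : ∀ f ∈ M, f x0 ∈ T := by
      intro f hf
      exact Set.mem_biUnion hf ⟨x0, rfl, rfl⟩
    set I : Set (Set Y) := (fun f => f '' K ∪ T) '' M with hIdef
    have hI : I ⊆ κY := by
      rintro _ ⟨f, hf, rfl⟩
      have h2 := hY.1.2 {f '' K, T} ?_ ?_
      · simpa [Set.sUnion_pair] using h2
      · rintro S hS
        rcases hS with rfl | rfl
        · exact hM f hf K hK
        · exact hTconn
      · exact ⟨f x0, by
          rintro S hS
          rcases hS with rfl | rfl
          · exact Set.mem_image_of_mem f hx0
          · exact hmemT f hf⟩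
    have hInter : (⋂₀ I).Nonempty := by
      refine ⟨f0 x0, ?_⟩
      rintro _ ⟨f, hf, rfl⟩
      exact Or.inr (hmemT f0 hf0)
    have hU := hY.1.2 I hI hInter
    have heq : ⋃₀ I = ⋃ f ∈ M, f '' K := by
      ext y
      simp only [hIdef, Set.sUnion_image, Set.mem_iUnion, Set.mem_union, hTdef,
        Set.image_singleton, Set.mem_singleton_iff, Set.mem_image]
      constructor
      · rintro ⟨f, hf, h | h⟩
        · exact ⟨f, hf, h⟩
        · rcases h with ⟨g, hg, rfl⟩
          exact ⟨g, hg, x0, hx0, rfl⟩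
      · rintro ⟨f, hf, h⟩
        exact ⟨f, hf, Or.inl h⟩
    rwa [heq] at hU
end

section
/- Homotopy of connectivity morphisms is an equivalence relation: for integral connectivity spaces X, Y, the relation 'g is homotopic to f', meaning there is a function h : [0,1] × X → Y with h(0,−)=f, h(1,−)=g, h(t,K) connected in Y for all t and all connected K ⊆ X, and h(D,x) connected in Y for all connected D ⊆ [0,1] (i.e., intervals) and all x ∈ X, is reflexive, symmetric and transitive on connectivity morphisms X → Y. -/
/-- connectivity homotopy over the unit interval `[0,1]` (whose connected subsets are
its subintervals, i.e. its preconnected subsets) -/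
def ConnHomotopic {X Y : Type*} (κX : Set (Set X)) (κY : Set (Set Y))
    (f g : X → Y) : Prop :=
  ∃ h : Set.Icc (0 : ℝ) 1 → X → Y,
    h ⟨0, Set.left_mem_Icc.mpr zero_le_one⟩ = f ∧
    h ⟨1, Set.right_mem_Icc.mpr zero_le_one⟩ = g ∧
    (∀ t : Set.Icc (0 : ℝ) 1, ∀ K ∈ κX, (h t) '' K ∈ κY) ∧
    (∀ D : Set (Set.Icc (0 : ℝ) 1), IsPreconnected D →
      ∀ x : X, (fun t => h t x) '' D ∈ κY)

/-- union of two members of a connectivity structure with a common point -/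
lemma conn_union {Y : Type*} {κ : Set (Set Y)} (hκ : IsConnStruct κ)
    {A B : Set Y} (hA : A ∈ κ) (hB : B ∈ κ) {y : Y} (hyA : y ∈ A) (hyB : y ∈ B) :
    A ∪ B ∈ κ := by
  have := hκ.2 {A, B} (by rintro S (rfl | rfl) <;> simpa) ⟨y, by simp [hyA, hyB]⟩
  simpa using this

/-- homotopy of connectivity morphisms between integral connectivity
spaces is reflexive, symmetric and transitive. -/
theorem connHomotopic_equivalence {X Y : Type*} (κX : Set (Set X)) (κY : Set (Set Y))
    (hX : IsIntConnStruct κX) (hY : IsIntConnStruct κY) :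
    (∀ f : X → Y, (∀ K ∈ κX, f '' K ∈ κY) → ConnHomotopic κX κY f f) ∧
    (∀ f g : X → Y, (∀ K ∈ κX, f '' K ∈ κY) → (∀ K ∈ κX, g '' K ∈ κY) →
      ConnHomotopic κX κY f g → ConnHomotopic κX κY g f) ∧
    (∀ f g k : X → Y, (∀ K ∈ κX, f '' K ∈ κY) → (∀ K ∈ κX, g '' K ∈ κY) →
      (∀ K ∈ κX, k '' K ∈ κY) →
      ConnHomotopic κX κY f g → ConnHomotopic κX κY g k →
      ConnHomotopic κX κY f k) := by
  refine ⟨?_, ?_, ?_⟩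
  · -- reflexivity
    intro f hf
    refine ⟨fun _ => f, rfl, rfl, fun t => hf, ?_⟩
    intro D _ x
    rcases D.eq_empty_or_nonempty with rfl | ⟨t0, ht0⟩
    · simpa using hY.1.1
    · have : (fun _ : Set.Icc (0:ℝ) 1 => f x) '' D = {f x} := by
        apply Set.Subset.antisymm
        · rintro y ⟨t, _, rfl⟩; rfl
        · rintro y rfl; exact ⟨t0, ht0, rfl⟩
      rw [this]; exact hY.2 (f x)
  · -- symmetry
    rintro f g hf hg ⟨h, h0, h1, hK, hD⟩
    have mem1 : ∀ t : Set.Icc (0:ℝ) 1, 1 - (t : ℝ) ∈ Set.Icc (0:ℝ) 1 := by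
      intro t; constructor
      · linarith [t.2.2]
      · linarith [t.2.1]
    set σ : Set.Icc (0:ℝ) 1 → Set.Icc (0:ℝ) 1 := fun t => ⟨1 - t, mem1 t⟩ with hσ
    have hσc : Continuous σ := by
      apply Continuous.subtype_mk
      exact continuous_const.sub continuous_subtype_val
    refine ⟨fun t => h (σ t), ?_, ?_, fun t => hK (σ t), ?_⟩
    · have e : σ ⟨0, Set.left_mem_Icc.mpr zero_le_one⟩
          = ⟨1, Set.right_mem_Icc.mpr zero_le_one⟩ := Subtype.ext (by norm_num [hσ])
      show h (σ ⟨0, Set.left_mem_Icc.mpr zero_le_one⟩) = g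
      rw [e, h1]
    · have e : σ ⟨1, Set.right_mem_Icc.mpr zero_le_one⟩
          = ⟨0, Set.left_mem_Icc.mpr zero_le_one⟩ := Subtype.ext (by norm_num [hσ])
      show h (σ ⟨1, Set.right_mem_Icc.mpr zero_le_one⟩) = f
      rw [e, h0]
    · intro D hDc x
      have : (fun t => h (σ t) x) '' D = (fun t => h t x) '' (σ '' D) := by
        rw [Set.image_image]
      rw [this]
      exact hD _ (hDc.image σ hσc.continuousOn) x
  · -- transitivity
    rintro f g k hf hg hk ⟨h₁, h₁0, h₁1, h₁K, h₁D⟩ ⟨h₂, h₂0, h₂1, h₂K, h₂D⟩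
    have memd : ∀ t : Set.Icc (0:ℝ) 1, (t : ℝ) ≤ 1/2 → 2 * (t : ℝ) ∈ Set.Icc (0:ℝ) 1 := by
      intro t ht; constructor
      · linarith [t.2.1]
      · linarith
    have mems : ∀ t : Set.Icc (0:ℝ) 1, (1:ℝ)/2 ≤ (t:ℝ) → 2 * (t : ℝ) - 1 ∈ Set.Icc (0:ℝ) 1 := by
      intro t ht; constructor
      · linarith
      · linarith [t.2.2]
    classical
    set H : Set.Icc (0:ℝ) 1 → X → Y := fun t x =>
      if hle : (t : ℝ) ≤ 1/2 then h₁ ⟨2 * t, memd t hle⟩ x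
      else h₂ ⟨2 * t - 1, mems t (le_of_not_ge hle)⟩ x with hHdef
    have H1val : ∀ (t u : Set.Icc (0:ℝ) 1), (t : ℝ) ≤ 1/2 → (u : ℝ) = 2 * t → ∀ x,
        H t x = h₁ u x := by
      intro t u hle hu x
      simp only [hHdef, dif_pos hle]
      congr 1
      exact Subtype.ext hu.symm
    have H2val : ∀ (t u : Set.Icc (0:ℝ) 1), (1:ℝ)/2 ≤ (t:ℝ) → (u : ℝ) = 2 * t - 1 → ∀ x,
        H t x = h₂ u x := by
      intro t u ht hu x
      by_cases hle : (t : ℝ) ≤ 1/2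
      · have teq : (t : ℝ) = 1/2 := le_antisymm hle ht
        simp only [hHdef, dif_pos hle]
        have e1 : (⟨2 * (t:ℝ), memd t hle⟩ : Set.Icc (0:ℝ) 1)
            = ⟨1, Set.right_mem_Icc.mpr zero_le_one⟩ := Subtype.ext (show 2 * (t:ℝ) = 1 by rw [teq]; norm_num)
        have e2 : u = ⟨0, Set.left_mem_Icc.mpr zero_le_one⟩ :=
          Subtype.ext (show (u:ℝ) = 0 by rw [hu, teq]; norm_num)
        rw [e1, h₁1, e2, h₂0]
      · simp only [hHdef, dif_neg hle]
        congr 1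
        exact Subtype.ext hu.symm
    refine ⟨H, ?_, ?_, ?_, ?_⟩
    · funext x
      rw [H1val ⟨0, Set.left_mem_Icc.mpr zero_le_one⟩ ⟨0, Set.left_mem_Icc.mpr zero_le_one⟩
        (by norm_num) (by norm_num) x, h₁0]
    · funext x
      rw [H2val ⟨1, Set.right_mem_Icc.mpr zero_le_one⟩ ⟨1, Set.right_mem_Icc.mpr zero_le_one⟩
        (by norm_num) (by norm_num) x, h₂1]
    · intro t K hKmem
      by_cases hle : (t : ℝ) ≤ 1/2
      · have : H t = h₁ ⟨2 * t, memd t hle⟩ := funext fun x => H1val t _ hle rfl x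
        rw [this]; exact h₁K _ K hKmem
      · have : H t = h₂ ⟨2 * t - 1, mems t (le_of_not_ge hle)⟩ :=
          funext fun x => H2val t _ (le_of_not_ge hle) rfl x
        rw [this]; exact h₂K _ K hKmem
    · intro D hDc x
      set D₁ : Set (Set.Icc (0:ℝ) 1) := D ∩ {t | (t : ℝ) ≤ 1/2} with hD₁
      set D₂ : Set (Set.Icc (0:ℝ) 1) := D ∩ {t | (1:ℝ)/2 ≤ (t:ℝ)} with hD₂
      have hsplit : D = D₁ ∪ D₂ := by
        ext t; simp only [hD₁, hD₂, Set.mem_union, Set.mem_inter_iff, Set.mem_setOf_eq]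
        constructor
        · intro ht; rcases le_total (t : ℝ) (1/2) with h | h
          · exact Or.inl ⟨ht, h⟩
          · exact Or.inr ⟨ht, h⟩
        · rintro (⟨ht, _⟩ | ⟨ht, _⟩) <;> exact ht
      have hvalD : IsPreconnected (Subtype.val '' D : Set ℝ) :=
        hDc.image _ continuous_subtype_val.continuousOn
      have hpre : ∀ (s : Set ℝ), s.OrdConnected →
          ∀ (E : Set (Set.Icc (0:ℝ) 1)), Subtype.val '' E = Subtype.val '' D ∩ s →
          IsPreconnected E := by
        intro s hs E hE
        rw [← Topology.IsInducing.subtypeVal.isPreconnected_image, hE]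
        exact (hvalD.ordConnected.inter hs).isPreconnected
      have hD₁c : IsPreconnected D₁ := by
        apply hpre (Set.Iic (1/2)) Set.ordConnected_Iic D₁
        ext r; simp only [Set.mem_image, Set.mem_inter_iff, Set.mem_Iic, hD₁, Set.mem_setOf_eq]
        constructor
        · rintro ⟨t, ⟨ht, hle⟩, rfl⟩; exact ⟨⟨t, ht, rfl⟩, hle⟩
        · rintro ⟨⟨t, ht, rfl⟩, hle⟩; exact ⟨t, ⟨ht, hle⟩, rfl⟩
      have hD₂c : IsPreconnected D₂ := by
        apply hpre (Set.Ici (1/2)) Set.ordConnected_Ici D₂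
        ext r; simp only [Set.mem_image, Set.mem_inter_iff, Set.mem_Ici, hD₂, Set.mem_setOf_eq]
        constructor
        · rintro ⟨t, ⟨ht, hle⟩, rfl⟩; exact ⟨⟨t, ht, rfl⟩, hle⟩
        · rintro ⟨⟨t, ht, rfl⟩, hle⟩; exact ⟨t, ⟨ht, hle⟩, rfl⟩
      -- parametrized pieces
      set φ₁ : D₁ → Set.Icc (0:ℝ) 1 := fun t => ⟨2 * (t : ℝ), memd t t.2.2⟩ with hφ₁
      set φ₂ : D₂ → Set.Icc (0:ℝ) 1 := fun t => ⟨2 * (t : ℝ) - 1, mems t t.2.2⟩ with hφ₂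
      have himg1 : (fun t => H t x) '' D₁ = (fun t => h₁ t x) '' (φ₁ '' Set.univ) := by
        rw [Set.image_image, Set.image_univ]
        ext y; constructor
        · rintro ⟨t, ht, rfl⟩
          exact ⟨⟨t, ht⟩, (H1val t (φ₁ ⟨t, ht⟩) ht.2 rfl x).symm⟩
        · rintro ⟨⟨t, ht⟩, rfl⟩
          exact ⟨t, ht, H1val t (φ₁ ⟨t, ht⟩) ht.2 rfl x⟩
      have himg2 : (fun t => H t x) '' D₂ = (fun t => h₂ t x) '' (φ₂ '' Set.univ) := by
        rw [Set.image_image, Set.image_univ]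
        ext y; constructor
        · rintro ⟨t, ht, rfl⟩
          exact ⟨⟨t, ht⟩, (H2val t (φ₂ ⟨t, ht⟩) ht.2 rfl x).symm⟩
        · rintro ⟨⟨t, ht⟩, rfl⟩
          exact ⟨t, ht, H2val t (φ₂ ⟨t, ht⟩) ht.2 rfl x⟩
      have hpc1 : IsPreconnected (φ₁ '' Set.univ) := by
        have : IsPreconnected (Set.univ : Set D₁) := by
          rw [← Topology.IsInducing.subtypeVal.isPreconnected_image, Set.image_univ,
            Subtype.range_val]
          exact hD₁c
        exact this.image φ₁ (Continuous.continuousOn (Continuous.subtype_mk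
          (continuous_const.mul (continuous_subtype_val.comp continuous_subtype_val)) _))
      have hpc2 : IsPreconnected (φ₂ '' Set.univ) := by
        have : IsPreconnected (Set.univ : Set D₂) := by
          rw [← Topology.IsInducing.subtypeVal.isPreconnected_image, Set.image_univ,
            Subtype.range_val]
          exact hD₂c
        exact this.image φ₂ (Continuous.continuousOn (Continuous.subtype_mk
          ((continuous_const.mul (continuous_subtype_val.comp continuous_subtype_val)).sub
            continuous_const) _))
      have hA1 : (fun t => H t x) '' D₁ ∈ κY := by rw [himg1]; exact h₁D _ hpc1 x
      have hA2 : (fun t => H t x) '' D₂ ∈ κY := by rw [himg2]; exact h₂D _ hpc2 x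
      have himgsplit : (fun t => H t x) '' D
          = (fun t => H t x) '' D₁ ∪ (fun t => H t x) '' D₂ := by
        rw [hsplit, Set.image_union]
      rw [himgsplit]
      rcases D₁.eq_empty_or_nonempty with he1 | hne1
      · rw [he1]; simpa using hA2
      rcases D₂.eq_empty_or_nonempty with he2 | hne2
      · rw [he2]; simpa using hA1
      -- both nonempty: 1/2 ∈ D
      obtain ⟨a, haD, ha⟩ := hne1
      obtain ⟨b, hbD, hb⟩ := hne2
      have hmm : ((1:ℝ)/2) ∈ Subtype.val '' D := by
        refine hvalD.ordConnected.out ⟨a, haD, rfl⟩ ⟨b, hbD, rfl⟩ ⟨ha, hb⟩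
      obtain ⟨m, hmD, hm⟩ := hmm
      have hm1 : m ∈ D₁ := ⟨hmD, by simp [Set.mem_setOf_eq, hm]⟩
      have hm2 : m ∈ D₂ := ⟨hmD, by simp [Set.mem_setOf_eq, hm]⟩
      exact conn_union hY.1 hA1 hA2 ⟨m, hm1, rfl⟩ ⟨m, hm2, rfl⟩
end

section
/- The connectivity space of the unit circle S¹ (connected subsets being the topologically connected subsets of the circle) is contractible in the connectivity sense: the identity map of S¹ is connectivity-homotopic to a constant map, via h(t,z) = z·exp(i t/(1−t)) for t ∈ [0,1) and h(1,z) = 1. -/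
open Set

noncomputable def circG (z : Circle) (t : ℝ) : Circle :=
  if t < 1 then z * Circle.exp (t / (1 - t)) else 1

lemma circG_contOn (z : Circle) : ContinuousOn (circG z) (Set.Iio 1) := by
  have : ContinuousOn (fun t : ℝ => z * Circle.exp (t / (1 - t))) (Set.Iio 1) := by
    apply ContinuousOn.mul continuousOn_const
    exact Circle.exp.continuous.comp_continuousOn
      (continuousOn_id.div (continuousOn_const.sub continuousOn_id)
        (fun x hx => sub_ne_zero_of_ne (ne_of_gt hx)))
  exact this.congr (fun t ht => if_pos ht)

-- surjectivity onto circle from a tail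
lemma circG_tail_surj (z : Circle) (a : ℝ) (ha0 : 0 ≤ a) (ha1 : a < 1) (w : Circle) :
    ∃ t ∈ Set.Ico a (1:ℝ), circG z t = w := by
  obtain ⟨s₀, hs₀⟩ : ∃ s₀ : ℝ, Circle.exp s₀ = z⁻¹ * w := ⟨_, Circle.exp_arg _⟩
  set c : ℝ := max 0 (a / (1 - a))
  obtain ⟨n, hn⟩ : ∃ n : ℕ, c - s₀ ≤ n * (2 * Real.pi) := by
    obtain ⟨n, hn⟩ := Archimedean.arch (c - s₀) (by positivity : (0:ℝ) < 2 * Real.pi)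
    exact ⟨n, by simpa [nsmul_eq_mul] using hn⟩
  set s : ℝ := s₀ + n * (2 * Real.pi)
  have hsc : c ≤ s := by simp only [s]; linarith
  have hs0 : 0 ≤ s := le_trans (le_max_left _ _) hsc
  have hsa : a / (1 - a) ≤ s := le_trans (le_max_right _ _) hsc
  have h1s : (0:ℝ) < 1 + s := by linarith
  refine ⟨s / (1 + s), ⟨?_, ?_⟩, ?_⟩
  · rw [div_le_iff₀ (by linarith : (0:ℝ) < 1 - a)] at hsa
    rw [le_div_iff₀ h1s]; nlinarith
  · rw [div_lt_one h1s]; linarith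
  · have hlt : s / (1 + s) < 1 := by rw [div_lt_one h1s]; linarith
    rw [circG, if_pos hlt]
    have : s / (1 + s) / (1 - s / (1 + s)) = s := by
      field_simp
      ring
    rw [this]
    have : Circle.exp s = z⁻¹ * w := by
      rw [show s = s₀ + n * (2 * Real.pi) from rfl, Circle.periodic_exp.nat_mul n s₀, hs₀]
    rw [this]; group

lemma circle_univ_preconn : IsPreconnected (Set.univ : Set Circle) := by
  have h : Set.range Circle.exp = Set.univ := Set.eq_univ_of_forall fun z => ⟨_, Circle.exp_arg z⟩
  rw [← h, ← Set.image_univ]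
  exact isPreconnected_univ.image _ Circle.exp.continuous.continuousOn

/-- the connectivity space of the circle (connected sets = topologically
connected subsets) is contractible: `h(t,z) = z·exp(i·t/(1−t))` for `t < 1`,
`h(1,z) = 1`, is a connectivity homotopy from the identity to the constant map `1`. -/
theorem circle_conn_contractible :
    ∃ h : Set.Icc (0 : ℝ) 1 → Circle → Circle,
      (∀ t : Set.Icc (0 : ℝ) 1, (t : ℝ) < 1 → ∀ z : Circle,
        (h t z : ℂ) = (z : ℂ) * Complex.exp (Complex.I * ((t : ℝ) / (1 - (t : ℝ))))) ∧
      (∀ z : Circle, h ⟨1, Set.right_mem_Icc.mpr zero_le_one⟩ z = 1) ∧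
      h ⟨0, Set.left_mem_Icc.mpr zero_le_one⟩ = id ∧
      (∀ z : Circle, h ⟨1, Set.right_mem_Icc.mpr zero_le_one⟩ z =
        (fun _ : Circle => (1 : Circle)) z) ∧
      (∀ t : Set.Icc (0 : ℝ) 1, ∀ K : Set Circle, IsPreconnected K →
        IsPreconnected ((h t) '' K)) ∧
      (∀ D : Set (Set.Icc (0 : ℝ) 1), IsPreconnected D → ∀ z : Circle,
        IsPreconnected ((fun t => h t z) '' D)) := by
  refine ⟨fun t z => circG z t, ?_, ?_, ?_, ?_, ?_, ?_⟩
  · intro t ht z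
    show (circG z ↑t : ℂ) = _
    rw [circG, if_pos ht]
    push_cast [Circle.coe_exp]
    ring_nf
  · intro z; simp [circG]
  · funext z; simp [circG, zero_lt_one]
  · intro z; simp [circG]
  · intro t K hK
    by_cases ht : (t : ℝ) < 1
    · have : (fun z => circG z t) '' K = (fun z => z * Circle.exp (t / (1 - t))) '' K := by
        apply Set.image_congr; intro z _; rw [circG, if_pos ht]
      rw [this]
      exact hK.image _ (Continuous.continuousOn (by continuity))
    · apply Set.Subsingleton.isPreconnected
      intro x hx y hy
      obtain ⟨a, -, rfl⟩ := hx
      obtain ⟨b, -, rfl⟩ := hy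
      simp [circG, ht]
  · intro D hD z
    show IsPreconnected ((fun t : Set.Icc (0:ℝ) 1 => circG z ↑t) '' D)
    rw [show ((fun t : Set.Icc (0:ℝ) 1 => circG z ↑t) '' D) = circG z '' (Subtype.val '' D) from
      (Set.image_image _ _ _).symm]
    set D' : Set ℝ := Subtype.val '' D with hD'def
    have hD' : IsPreconnected D' := hD.image _ continuous_subtype_val.continuousOn
    have hle : ∀ a ∈ D', 0 ≤ a ∧ a ≤ 1 := by
      rintro a ⟨⟨a, ha⟩, -, rfl⟩; exact ha
    by_cases h1 : (1 : ℝ) ∈ D'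
    · by_cases hex : ∃ a ∈ D', a < 1
      · obtain ⟨a, haD, ha1⟩ := hex
        have : circG z '' D' = Set.univ := by
          apply Set.eq_univ_of_forall
          intro w
          obtain ⟨t, ht, hw⟩ := circG_tail_surj z a (hle a haD).1 ha1 w
          exact ⟨t, hD'.ordConnected.out haD h1 ⟨ht.1, ht.2.le⟩, hw⟩
        rw [this]
        exact circle_univ_preconn
      · push_neg at hex
        apply Set.Subsingleton.isPreconnected
        rintro x ⟨a, ha, rfl⟩ y ⟨b, hb, rfl⟩
        have ha1 : a = 1 := le_antisymm (hle a ha).2 (hex a ha)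
        have hb1 : b = 1 := le_antisymm (hle b hb).2 (hex b hb)
        rw [ha1, hb1]
    · apply hD'.image
      apply (circG_contOn z).mono
      intro a ha
      exact lt_of_le_of_ne (hle a ha).2 (fun h => h1 (h ▸ ha))
end

section
/- Let X be the integral connectivity space on the carrier P(ℝ) whose nontrivial connected subsets are exactly the subsets of P(ℝ) of cardinality strictly greater than card(ℝ). Then every connectivity morphism from the real interval [0,1] (with its topological connectivity structure) into the space of connectivity endomorphisms Cnct(X,X) is constant; consequently no two distinct connectivity endomorphisms of X are homotopic. -/
/-- the integral connectivity structure on `P(ℝ)` whose nontrivial connected sets are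
exactly those of cardinality strictly greater than `card ℝ` -/
def bigConn : Set (Set (Set ℝ)) :=
  {s : Set (Set ℝ) | s = ∅ ∨ (∃ A : Set ℝ, s = {A}) ∨ Cardinal.mk ℝ < Cardinal.mk ↥s}

lemma bigConn_key
    (γ : Set.Icc (0 : ℝ) 1 → {f : Set ℝ → Set ℝ // ∀ K ∈ bigConn, f '' K ∈ bigConn})
    (h : ∀ D : Set (Set.Icc (0 : ℝ) 1), IsPreconnected D →
        ∀ K ∈ bigConn, (⋃ t ∈ D, (γ t).1 '' K) ∈ bigConn)
    (s t : Set.Icc (0 : ℝ) 1) : γ s = γ t := by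
  apply Subtype.ext
  funext A
  have hK : ({A} : Set (Set ℝ)) ∈ bigConn := Or.inr (Or.inl ⟨A, rfl⟩)
  have hS := h Set.univ isPreconnected_univ {A} hK
  set S : Set (Set ℝ) := ⋃ u ∈ (Set.univ : Set (Set.Icc (0:ℝ) 1)), (γ u).1 '' {A}
    with hSdef
  have hrange : S = Set.range (fun u : Set.Icc (0:ℝ) 1 => (γ u).1 A) := by
    ext x
    simp [hSdef]
  have hcard : ¬ Cardinal.mk ℝ < Cardinal.mk ↥S := by
    rw [hrange]
    intro hlt
    have h1 : Cardinal.mk ↥(Set.range fun u : Set.Icc (0:ℝ) 1 => (γ u).1 A)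
        ≤ Cardinal.mk ↥(Set.Icc (0:ℝ) 1) := Cardinal.mk_range_le
    have h2 : Cardinal.mk ↥(Set.Icc (0:ℝ) 1) ≤ Cardinal.mk ℝ := Cardinal.mk_set_le _
    exact absurd (h1.trans h2) (not_le.mpr hlt)
  have hs' : (γ s).1 A ∈ S := by rw [hrange]; exact ⟨s, rfl⟩
  have ht' : (γ t).1 A ∈ S := by rw [hrange]; exact ⟨t, rfl⟩
  rcases hS with h0 | ⟨B, hB⟩ | hbig
  · rw [h0] at hs'; exact absurd hs' (Set.notMem_empty _)
  · rw [hB] at hs' ht'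
    rw [hs', ht']
  · exact absurd hbig hcard

/-- every connectivity morphism from `[0,1]` into `Cnct(X,X)` (for the
space `X` above) is constant; hence no two distinct connectivity endomorphisms of `X`
are homotopic. -/
theorem bigConn_rigid :
    (∀ γ : Set.Icc (0 : ℝ) 1 → {f : Set ℝ → Set ℝ // ∀ K ∈ bigConn, f '' K ∈ bigConn},
      (∀ D : Set (Set.Icc (0 : ℝ) 1), IsPreconnected D →
        ∀ K ∈ bigConn, (⋃ t ∈ D, (γ t).1 '' K) ∈ bigConn) →
      ∀ s t : Set.Icc (0 : ℝ) 1, γ s = γ t) ∧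
    (∀ f g : {f : Set ℝ → Set ℝ // ∀ K ∈ bigConn, f '' K ∈ bigConn},
      (∃ γ : Set.Icc (0 : ℝ) 1 → {f : Set ℝ → Set ℝ // ∀ K ∈ bigConn, f '' K ∈ bigConn},
        (∀ D : Set (Set.Icc (0 : ℝ) 1), IsPreconnected D →
          ∀ K ∈ bigConn, (⋃ t ∈ D, (γ t).1 '' K) ∈ bigConn) ∧
        γ ⟨0, Set.left_mem_Icc.mpr zero_le_one⟩ = f ∧
        γ ⟨1, Set.right_mem_Icc.mpr zero_le_one⟩ = g) → f = g) := by
  constructor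
  · exact bigConn_key
  · rintro f g ⟨γ, hγ, h0, h1⟩
    rw [← h0, ← h1]
    exact bigConn_key γ hγ _ _
end

section
/- A finite integral connectivity space X is connected if and only if its generic graph G_X is connected (as an undirected graph); and X is irreducible if and only if G_X has exactly one source. -/
/-- a generic point: a nonempty irreducible connected set, i.e. a nonempty connected
set which is not the union of a family of proper connected subsets with nonempty
intersection -/
def GenericPt {X : Type*} (κ : Set (Set X)) (K : Set X) : Prop :=
  K ∈ κ ∧ K.Nonempty ∧
    ¬ ∃ E : Set (Set X), E ⊆ κ ∧ (∀ A ∈ E, A ⊂ K) ∧ (⋂₀ E).Nonempty ∧ ⋃₀ E = K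

/-- directed edge `g → h` of the generic graph: `g ⊋ h` with no generic point strictly
between -/
def GenEdge {X : Type*} (κ : Set (Set X)) (g h : Set X) : Prop :=
  GenericPt κ g ∧ GenericPt κ h ∧ h ⊂ g ∧
    ¬ ∃ k : Set X, GenericPt κ k ∧ h ⊂ k ∧ k ⊂ g

/-- the generic graph, as an undirected simple graph on the generic points -/
def GenGraph {X : Type*} (κ : Set (Set X)) : SimpleGraph {K : Set X // GenericPt κ K} where
  Adj a b := a ≠ b ∧ (GenEdge κ a.1 b.1 ∨ GenEdge κ b.1 a.1)
  symm := ⟨fun a b hab => ⟨hab.1.symm, hab.2.symm⟩⟩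
  loopless := ⟨fun a ha => ha.1 rfl⟩

section Aux

variable {X : Type*}

lemma aux_union_mem {κ : Set (Set X)} (hκ : IsConnStruct κ) {A B : Set X}
    (hA : A ∈ κ) (hB : B ∈ κ) (hAB : (A ∩ B).Nonempty) : A ∪ B ∈ κ := by
  have h := hκ.2 {A, B} (by rintro S (rfl | rfl) <;> assumption)
    (by rwa [Set.sInter_pair])
  rwa [Set.sUnion_pair] at h

lemma aux_singleton_generic {κ : Set (Set X)} (hκ : IsIntConnStruct κ) (x : X) :
    GenericPt κ {x} := by
  refine ⟨hκ.2 x, Set.singleton_nonempty x, ?_⟩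
  rintro ⟨E, hEκ, hprop, hint, hU⟩
  have hx : x ∈ ⋃₀ E := by rw [hU]; exact rfl
  obtain ⟨A, hAE, hxA⟩ := hx
  exact (hprop A hAE).not_subset (Set.singleton_subset_iff.mpr hxA)

lemma aux_reach_aux {κ : Set (Set X)} [Finite X] :
    ∀ n : ℕ, ∀ g h : Set X, ∀ hg : GenericPt κ g, ∀ hh : GenericPt κ h, h ⊂ g →
      g.ncard - h.ncard ≤ n →
      (GenGraph κ).Reachable ⟨g, hg⟩ ⟨h, hh⟩ := by
  intro n
  induction n using Nat.strong_induction_on with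
  | _ n ih =>
    intro g h hg hh hsub hcard
    by_cases hE : ∃ k, GenericPt κ k ∧ h ⊂ k ∧ k ⊂ g
    · obtain ⟨k, hk, hhk, hkg⟩ := hE
      have c1 : k.ncard < g.ncard := Set.ncard_lt_ncard hkg (Set.toFinite g)
      have c2 : h.ncard < k.ncard := Set.ncard_lt_ncard hhk (Set.toFinite k)
      have r1 := ih (n - 1) (by omega) g k hg hk hkg (by omega)
      have r2 := ih (n - 1) (by omega) k h hk hh hhk (by omega)
      exact r1.trans r2
    · have hadj : (GenGraph κ).Adj ⟨g, hg⟩ ⟨h, hh⟩ := by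
        refine ⟨?_, Or.inl ⟨hg, hh, hsub, hE⟩⟩
        intro e
        exact hsub.ne (congrArg Subtype.val e).symm
      exact hadj.reachable

lemma aux_reach_subset {κ : Set (Set X)} [Finite X] {g h : Set X}
    (hg : GenericPt κ g) (hh : GenericPt κ h) (hsub : h ⊆ g) :
    (GenGraph κ).Reachable ⟨g, hg⟩ ⟨h, hh⟩ := by
  by_cases he : h = g
  · subst he; exact SimpleGraph.Reachable.refl _
  · exact aux_reach_aux (g.ncard - h.ncard) g h hg hh ⟨hsub, fun hgh => he (subset_antisymm hsub hgh)⟩ le_rfl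

lemma aux_reach_points {κ : Set (Set X)} [Finite X] (hκ : IsIntConnStruct κ) :
    ∀ n : ℕ, ∀ K : Set X, K ∈ κ → K.Nonempty → K.ncard ≤ n →
      ∀ x ∈ K, ∀ y ∈ K,
      (GenGraph κ).Reachable ⟨{x}, aux_singleton_generic hκ x⟩ ⟨{y}, aux_singleton_generic hκ y⟩ := by
  intro n
  induction n using Nat.strong_induction_on with
  | _ n ih =>
    intro K hK hne hcard x hx y hy
    by_cases hgen : GenericPt κ K
    · have r1 := aux_reach_subset hgen (aux_singleton_generic hκ x) (Set.singleton_subset_iff.mpr hx)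
      have r2 := aux_reach_subset hgen (aux_singleton_generic hκ y) (Set.singleton_subset_iff.mpr hy)
      exact r1.symm.trans r2
    · have hex : ∃ E : Set (Set X), E ⊆ κ ∧ (∀ A ∈ E, A ⊂ K) ∧ (⋂₀ E).Nonempty ∧ ⋃₀ E = K := by
        by_contra hcon
        exact hgen ⟨hK, hne, hcon⟩
      obtain ⟨E, hEκ, hprop, ⟨p, hp⟩, hU⟩ := hex
      have hxU : x ∈ ⋃₀ E := by rwa [hU]
      have hyU : y ∈ ⋃₀ E := by rwa [hU]
      obtain ⟨A, hAE, hxA⟩ := hxU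
      obtain ⟨B, hBE, hyB⟩ := hyU
      have hpA : p ∈ A := hp A hAE
      have hpB : p ∈ B := hp B hBE
      have hcA : A.ncard < K.ncard := Set.ncard_lt_ncard (hprop A hAE) (Set.toFinite K)
      have hcB : B.ncard < K.ncard := Set.ncard_lt_ncard (hprop B hBE) (Set.toFinite K)
      have r1 := ih (n - 1) (by omega) A (hEκ hAE) ⟨p, hpA⟩ (by omega) x hxA p hpA
      have r2 := ih (n - 1) (by omega) B (hEκ hBE) ⟨p, hpB⟩ (by omega) y hyB p hpB
      exact r1.trans r2.symm

lemma aux_walk_conn {κ : Set (Set X)} (hκ : IsConnStruct κ) :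
    ∀ a b : {K : Set X // GenericPt κ K}, (GenGraph κ).Walk a b →
      ∃ C ∈ κ, a.1 ⊆ C ∧ b.1 ⊆ C := by
  intro a b w
  induction w with
  | @nil u => exact ⟨u.1, u.2.1, subset_rfl, subset_rfl⟩
  | @cons u v b hadj w ih =>
    obtain ⟨C, hC, hvC, hbC⟩ := ih
    have hD : ∃ D ∈ κ, u.1 ⊆ D ∧ v.1 ⊆ D := by
      rcases hadj.2 with h | h
      · exact ⟨u.1, u.2.1, subset_rfl, h.2.2.1.subset⟩
      · exact ⟨v.1, v.2.1, h.2.2.1.subset, subset_rfl⟩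
    obtain ⟨D, hDκ, huD, hvD⟩ := hD
    obtain ⟨z, hz⟩ := v.2.2.1
    refine ⟨D ∪ C, aux_union_mem hκ hDκ hC ⟨z, hvD hz, hvC hz⟩, ?_, ?_⟩
    · exact huD.trans Set.subset_union_left
    · exact hbC.trans Set.subset_union_right

lemma aux_exists_max {κ : Set (Set X)} [Finite X] {g : Set X} (hg : GenericPt κ g) :
    ∃ m, GenericPt κ m ∧ g ⊆ m ∧ ∀ k, GenericPt κ k → ¬ m ⊂ k := by
  obtain ⟨m, hm, hmax⟩ := Set.Finite.exists_maximalFor Set.ncard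
    {m | GenericPt κ m ∧ g ⊆ m} (Set.toFinite _) ⟨g, hg, subset_rfl⟩
  refine ⟨m, hm.1, hm.2, ?_⟩
  intro k hk hmk
  have hkS : k ∈ {m | GenericPt κ m ∧ g ⊆ m} := ⟨hk, hm.2.trans hmk.subset⟩
  have hc : m.ncard < k.ncard := Set.ncard_lt_ncard hmk (Set.toFinite k)
  exact hc.not_ge (hmax hkS hc.le)

lemma aux_exists_edge {κ : Set (Set X)} [Finite X] {h : Set X} (hh : GenericPt κ h)
    (hex : ∃ g, GenericPt κ g ∧ h ⊂ g) : ∃ g, GenericPt κ g ∧ GenEdge κ g h := by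
  obtain ⟨m, hmS, hmin⟩ := Set.Finite.exists_minimalFor Set.ncard
    {g | GenericPt κ g ∧ h ⊂ g} (Set.toFinite _) hex
  refine ⟨m, hmS.1, hmS.1, hh, hmS.2, ?_⟩
  rintro ⟨k, hk, hhk, hkm⟩
  have hkS : k ∈ {g | GenericPt κ g ∧ h ⊂ g} := ⟨hk, hhk⟩
  have hc : k.ncard < m.ncard := Set.ncard_lt_ncard hkm (Set.toFinite m)
  exact hc.not_ge (hmin hkS hc.le)

end Aux

/-- a nonempty finite integral connectivity space is connected iff its
generic graph is connected (as an undirected graph), and irreducible iff its generic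
graph has exactly one source. -/
theorem genGraph_connected_and_source {X : Type*} [Finite X] [Nonempty X]
    (κ : Set (Set X)) (hκ : IsIntConnStruct κ) :
    (Set.univ ∈ κ ↔ (GenGraph κ).Connected) ∧
    (GenericPt κ Set.univ ↔
      ∃! g : {K : Set X // GenericPt κ K},
        ∀ h : {K : Set X // GenericPt κ K}, ¬ GenEdge κ h.1 g.1) := by
  constructor
  · constructor
    · -- univ connected → graph connected
      intro hu
      rw [SimpleGraph.connected_iff]
      obtain ⟨x0⟩ := ‹Nonempty X›
      refine ⟨?_, ⟨⟨{x0}, aux_singleton_generic hκ x0⟩⟩⟩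
      intro a b
      obtain ⟨x, hx⟩ := a.2.2.1
      obtain ⟨y, hy⟩ := b.2.2.1
      have ra : (GenGraph κ).Reachable ⟨a.1, a.2⟩ ⟨{x}, aux_singleton_generic hκ x⟩ :=
        aux_reach_subset a.2 _ (Set.singleton_subset_iff.mpr hx)
      have rb : (GenGraph κ).Reachable ⟨b.1, b.2⟩ ⟨{y}, aux_singleton_generic hκ y⟩ :=
        aux_reach_subset b.2 _ (Set.singleton_subset_iff.mpr hy)
      have rxy := aux_reach_points hκ (Set.univ : Set X).ncard Set.univ hu
        ⟨x, trivial⟩ le_rfl x trivial y trivial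
      exact ra.trans (rxy.trans rb.symm)
    · -- graph connected → univ connected
      intro hc
      obtain ⟨x0⟩ := ‹Nonempty X›
      have key : ∀ y : X, ∃ C, C ∈ κ ∧ x0 ∈ C ∧ y ∈ C := by
        intro y
        have hr := hc.preconnected ⟨{x0}, aux_singleton_generic hκ x0⟩
          ⟨{y}, aux_singleton_generic hκ y⟩
        obtain ⟨w⟩ := hr
        obtain ⟨C, hC, h1, h2⟩ := aux_walk_conn hκ.1 _ _ w
        exact ⟨C, hC, h1 rfl, h2 rfl⟩
      choose f hf using key
      have hmem := hκ.1.2 (Set.range f) (by rintro S ⟨y, rfl⟩; exact (hf y).1)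
        ⟨x0, by rintro S ⟨y, rfl⟩; exact (hf y).2.1⟩
      have hU : ⋃₀ Set.range f = Set.univ :=
        Set.eq_univ_of_forall fun y => ⟨f y, ⟨y, rfl⟩, (hf y).2.2⟩
      rwa [hU] at hmem
  · constructor
    · -- univ generic → unique source
      intro huniv
      refine ⟨⟨Set.univ, huniv⟩, ?_, ?_⟩
      · intro h he
        exact he.2.2.1.not_subset (Set.subset_univ h.1)
      · intro g' hg'
        refine Subtype.ext ?_
        by_contra hne
        have hss : g'.1 ⊂ Set.univ := Set.ssubset_univ_iff.mpr hne
        obtain ⟨g, hg, hedge⟩ := aux_exists_edge g'.2 ⟨Set.univ, huniv, hss⟩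
        exact hg' ⟨g, hg⟩ hedge
    · -- unique source → univ generic
      rintro ⟨g₀, _, huniq⟩
      have hall : ∀ x : X, x ∈ g₀.1 := by
        intro x
        obtain ⟨m, hm, hxm, hmax⟩ := aux_exists_max (aux_singleton_generic hκ x)
        have hsrc : ∀ h : {K : Set X // GenericPt κ K}, ¬ GenEdge κ h.1 m :=
          fun h he => hmax h.1 h.2 he.2.2.1
        have heq : (⟨m, hm⟩ : {K : Set X // GenericPt κ K}) = g₀ := huniq ⟨m, hm⟩ hsrc
        have : m = g₀.1 := congrArg Subtype.val heq
        exact this ▸ hxm rfl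
      have huniv : g₀.1 = Set.univ := Set.eq_univ_of_forall hall
      exact huniv ▸ g₀.2
end

section
/- For every nonempty finite integral connectivity space X with n points, the index ω(X) satisfies ω(X) ≤ n − 1; moreover, up to isomorphism the unique integral connectivity space with n points and index n − 1 is V_n, the space on {1,…,n} whose nontrivial connected sets are exactly {1,…,k} for k = 2,…,n. -/
/-- the index of `X` is at least `m` iff there is a strictly decreasing chain of `m+1`
generic points (equivalently, a directed path of length `m` in the generic graph) -/
def DescChain {X : Type*} (κ : Set (Set X)) (m : ℕ) : Prop :=
  ∃ c : Fin (m + 1) → Set X, (∀ i, GenericPt κ (c i)) ∧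
    ∀ i j : Fin (m + 1), i < j → c j ⊂ c i

/-- the structure of the space `V_n`: nontrivial connected sets are the initial
segments `{1,…,k}`, `k = 2,…,n` -/
def Vstruct (n : ℕ) : Set (Set (Fin n)) :=
  {s : Set (Fin n) | s = ∅ ∨ (∃ x : Fin n, s = {x}) ∨
    ∃ k : ℕ, 2 ≤ k ∧ k ≤ n ∧ s = {j : Fin n | (j : ℕ) < k}}

lemma chain_ncard {X : Type*} [Finite X] {N : ℕ} (c : Fin N → Set X)
    (hc : ∀ i j : Fin N, i < j → c j ⊂ c i) (i j : Fin N) (hij : i ≤ j) :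
    (c j).ncard + ((j : ℕ) - i) ≤ (c i).ncard := by
  obtain ⟨k, hk⟩ : ∃ k, (j : ℕ) = (i : ℕ) + k := ⟨(j : ℕ) - i, by omega⟩
  induction k generalizing j with
  | zero =>
    have : j = i := Fin.ext (by omega)
    subst this; simp
  | succ k ih =>
    have hj' : (i : ℕ) + k < N := by omega
    set j' : Fin N := ⟨(i : ℕ) + k, hj'⟩ with hj'def
    have h1 := ih j' (by rw [Fin.le_def]; simp [j']) (by simp [j'])
    have h2 : c j ⊂ c j' := hc j' j (by rw [Fin.lt_def]; simp [j']; omega)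
    have h3 : (c j).ncard < (c j').ncard := Set.ncard_lt_ncard h2 (Set.toFinite _)
    have h4 : (j' : ℕ) = (i : ℕ) + k := rfl
    omega

lemma main3 {X : Type*} [Finite X] (n : ℕ) (hn : 1 ≤ n) (hcard : Nat.card X = n)
    (κ : Set (Set X)) (hκ : IsIntConnStruct κ)
    (c : Fin n → Set X) (hg : ∀ i, GenericPt κ (c i))
    (hlt : ∀ i j : Fin n, i < j → c j ⊂ c i) :
    ∃ e : X ≃ Fin n, ∀ s : Set X, s ∈ κ ↔ e '' s ∈ Vstruct n := by
  classical
  haveI := Fintype.ofFinite X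
  have npos : 0 < n := hn
  have hmono : ∀ i j : Fin n, i ≤ j → c j ⊆ c i := by
    intro i j hij
    rcases eq_or_lt_of_le hij with h | h
    · rw [h]
    · exact (hlt i j h).subset
  have hnc : ∀ i : Fin n, (c i).ncard = n - i := by
    intro i
    have h1 := chain_ncard c hlt i ⟨n-1, by omega⟩
      (by rw [Fin.le_def]; exact Nat.le_sub_one_of_lt i.isLt)
    have h2 := chain_ncard c hlt ⟨0, npos⟩ i (by rw [Fin.le_def]; exact Nat.zero_le _)
    have h3 : 1 ≤ (c ⟨n-1, by omega⟩).ncard := (Set.ncard_pos (Set.toFinite _)).mpr (hg _).2.1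
    have h4 : (c ⟨0, npos⟩).ncard ≤ n := by
      have := Set.ncard_le_ncard (Set.subset_univ (c ⟨0, npos⟩)) (Set.toFinite _)
      rwa [Set.ncard_univ, hcard] at this
    simp only [Fin.val_mk] at h1 h2 h3
    have := i.isLt
    omega
  have hc0 : c ⟨0, npos⟩ = Set.univ := by
    apply Set.eq_of_subset_of_ncard_le (Set.subset_univ _)
    rw [Set.ncard_univ, hcard, hnc]
    simp
  have hfilt : ∀ x : X, (Finset.univ.filter (fun i : Fin n => x ∈ c i)).Nonempty :=
    fun x => ⟨⟨0, npos⟩, by simp [hc0]⟩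
  set t : X → Fin n := fun x => (Finset.univ.filter (fun i : Fin n => x ∈ c i)).max' (hfilt x)
    with ht
  have htmem : ∀ x, x ∈ c (t x) := by
    intro x
    have := Finset.max'_mem _ (hfilt x)
    simpa using this
  have hchar : ∀ (x : X) (i : Fin n), x ∈ c i ↔ i ≤ t x := by
    intro x i
    constructor
    · intro h
      refine Finset.le_max' _ i ?_
      simp only [Finset.mem_filter, Finset.mem_univ, true_and]
      exact h
    · intro h
      exact hmono i (t x) h (htmem x)
  have hdiff : ∀ (i i' : Fin n), (i' : ℕ) = (i : ℕ) + 1 → ∃ a, c i \ c i' = {a} := by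
    intro i i' hii'
    have hsub : c i' ⊆ c i := hmono i i' (by rw [Fin.le_def]; omega)
    have h1 : (c i \ c i').ncard = 1 := by
      rw [Set.ncard_diff hsub, hnc, hnc, hii']
      have := i'.isLt
      omega
    exact Set.ncard_eq_one.mp h1
  have htinj : Function.Injective t := by
    intro x y hxy
    by_cases hlast : (t x : ℕ) + 1 < n
    · obtain ⟨a, ha⟩ := hdiff (t x) ⟨(t x : ℕ) + 1, hlast⟩ rfl
      have hx : x ∈ c (t x) \ c ⟨(t x : ℕ) + 1, hlast⟩ := by
        refine ⟨htmem x, fun hmem => ?_⟩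
        have h := (hchar x _).mp hmem
        rw [Fin.le_def] at h; simp at h
      have hy : y ∈ c (t x) \ c ⟨(t x : ℕ) + 1, hlast⟩ := by
        refine ⟨by rw [hxy]; exact htmem y, fun hmem => ?_⟩
        have h := (hchar y _).mp hmem
        rw [Fin.le_def, ← hxy] at h; simp at h
      rw [ha, Set.mem_singleton_iff] at hx hy
      rw [hx, hy]
    · have h1 : (c (t x)).ncard = 1 := by
        rw [hnc]
        have := (t x).isLt
        omega
      obtain ⟨a, ha⟩ := Set.ncard_eq_one.mp h1
      have hx := htmem x
      have hy := htmem y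
      rw [← hxy] at hy
      rw [ha, Set.mem_singleton_iff] at hx hy
      rw [hx, hy]
  have htbij : Function.Bijective t := by
    rw [Fintype.bijective_iff_injective_and_card]
    refine ⟨htinj, ?_⟩
    rw [Fintype.card_fin, ← Nat.card_eq_fintype_card, hcard]
  set e : X ≃ Fin n := (Equiv.ofBijective t htbij).trans (Fin.revPerm) with he
  have hev : ∀ x, (e x : ℕ) = n - 1 - (t x : ℕ) := by
    intro x
    simp [he, Equiv.trans_apply, Fin.revPerm, Fin.val_rev]
    omega
  have hkey : ∀ (x : X) (i : Fin n), x ∈ c i ↔ (e x : ℕ) < n - (i : ℕ) := by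
    intro x i
    rw [hchar, Fin.le_def, hev]
    have h1 := (t x).isLt
    have h2 := i.isLt
    omega
  have himg : ∀ i : Fin n, e '' (c i) = {j : Fin n | (j : ℕ) < n - (i : ℕ)} := by
    intro i
    ext j
    rw [Set.mem_image]
    constructor
    · rintro ⟨x, hx, rfl⟩
      exact (hkey x i).mp hx
    · intro hj
      refine ⟨e.symm j, (hkey _ i).mpr ?_, e.apply_symm_apply j⟩
      rwa [Equiv.apply_symm_apply]
  have hclass : ∀ s ∈ κ, 2 ≤ s.ncard → ∃ i : Fin n, s = c i := by
    intro s hs hs2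
    have hne : (Finset.univ.filter (fun i : Fin n => s ⊆ c i)).Nonempty :=
      ⟨⟨0, npos⟩, by simp [hc0]⟩
    set i := Finset.max' _ hne with hi
    have hsub : s ⊆ c i := by
      have := Finset.max'_mem _ hne
      simpa using this
    refine ⟨i, ?_⟩
    by_contra hne'
    have hss : s ⊂ c i := ⟨hsub, fun h => hne' (Set.Subset.antisymm hsub h)⟩
    have hilt : (i : ℕ) + 1 < n := by
      by_contra h
      have h1 : (c i).ncard = 1 := by
        rw [hnc]
        have := i.isLt
        omega
      have := Set.ncard_le_ncard hsub (Set.toFinite _)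
      omega
    set i' : Fin n := ⟨(i : ℕ) + 1, hilt⟩ with hi'
    have hnsub : ¬ s ⊆ c i' := by
      intro h
      have := Finset.le_max' (Finset.univ.filter (fun i : Fin n => s ⊆ c i)) i'
        (by simpa using h)
      rw [← hi, Fin.le_def] at this
      simp [hi'] at this
    obtain ⟨a, ha⟩ := hdiff i i' rfl
    obtain ⟨b, hbs, hbn⟩ := Set.not_subset.mp hnsub
    have hba : b = a := by
      have h : b ∈ c i \ c i' := ⟨hsub hbs, hbn⟩
      rw [ha, Set.mem_singleton_iff] at h
      exact h
    have has : a ∈ s := hba ▸ hbs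
    have hi'lt : i < i' := by rw [Fin.lt_def]; simp [hi']
    have hint : (s ∩ c i').Nonempty := by
      by_contra h
      rw [Set.not_nonempty_iff_eq_empty] at h
      have hsd : s ⊆ c i \ c i' := by
        intro x hx
        refine ⟨hsub hx, fun hx' => ?_⟩
        have : x ∈ s ∩ c i' := ⟨hx, hx'⟩
        rw [h] at this
        exact this
      have h9 : s.ncard ≤ 1 := by
        have := Set.ncard_le_ncard hsd (Set.toFinite _)
        rw [ha] at this
        simpa using this
      omega
    apply (hg i).2.2
    refine ⟨{s, c i'}, ?_, ?_, ?_, ?_⟩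
    · intro A hA
      rcases hA with rfl | hA
      · exact hs
      · rw [Set.mem_singleton_iff] at hA; rw [hA]; exact (hg i').1
    · intro A hA
      rcases hA with rfl | hA
      · exact hss
      · rw [Set.mem_singleton_iff] at hA; rw [hA]; exact hlt i i' hi'lt
    · rw [Set.sInter_pair]; exact hint
    · rw [Set.sUnion_pair]
      apply Set.Subset.antisymm
      · exact Set.union_subset hss.subset (hlt i i' hi'lt).subset
      · intro x hx
        by_cases hx' : x ∈ c i'
        · exact Or.inr hx'
        · have h : x ∈ c i \ c i' := ⟨hx, hx'⟩
          rw [ha, Set.mem_singleton_iff] at h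
          rw [h]
          exact Or.inl has
  refine ⟨e, fun s => ?_⟩
  constructor
  · intro hs
    rcases Nat.lt_or_ge s.ncard 2 with h2 | h2
    · interval_cases h : s.ncard
      · have hse : s = ∅ := (Set.ncard_eq_zero (Set.toFinite _)).mp h
        rw [hse, Set.image_empty]
        exact Or.inl rfl
      · obtain ⟨x, rfl⟩ := Set.ncard_eq_one.mp h
        rw [Set.image_singleton]
        exact Or.inr (Or.inl ⟨e x, rfl⟩)
    · obtain ⟨i, rfl⟩ := hclass s hs h2
      rw [himg]
      rw [hnc] at h2
      exact Or.inr (Or.inr ⟨n - (i : ℕ), h2, by omega, rfl⟩)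
  · intro hv
    rcases hv with h0 | ⟨x, hx⟩ | ⟨k, hk2, hkn, hks⟩
    · rw [Set.image_eq_empty] at h0
      rw [h0]; exact hκ.1.1
    · have hsx : s = {e.symm x} := by
        have := congrArg (fun u => e.symm '' u) hx
        simpa [Equiv.symm_image_image, Set.image_singleton] using this
      rw [hsx]; exact hκ.2 _
    · have hnk : n - k < n := by omega
      have hsc : s = c ⟨n - k, hnk⟩ := by
        ext x
        constructor
        · intro hxs
          have h5 : e x ∈ e '' s := Set.mem_image_of_mem e hxs
          rw [hks] at h5
          have h6 : (e x : ℕ) < k := h5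
          refine (hkey x _).mpr ?_
          simp only [Fin.val_mk]
          omega
        · intro hxc
          have h5 := (hkey x _).mp hxc
          simp only [Fin.val_mk] at h5
          have h6 : e x ∈ e '' s := by
            rw [hks]
            show (e x : ℕ) < k
            omega
          obtain ⟨y, hy, hyx⟩ := h6
          rwa [← e.injective hyx]
      rw [hsc]; exact (hg _).1


lemma singleton_genericPt {X : Type*} {κ : Set (Set X)} {x : X} (hx : {x} ∈ κ) :
    GenericPt κ {x} := by
  refine ⟨hx, ⟨x, rfl⟩, ?_⟩
  rintro ⟨E, hEκ, hEsub, hEint, hEun⟩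
  have hx' : x ∈ ⋃₀ E := by rw [hEun]; exact Set.mem_singleton x
  obtain ⟨A, hA, hxA⟩ := hx'
  have h := hEsub A hA
  rw [Set.ssubset_singleton_iff] at h
  subst h; exact hxA

lemma vstruct_generic {n : ℕ} (k : ℕ) (hk1 : 1 ≤ k) (hkn : k ≤ n) :
    GenericPt (Vstruct n) {j : Fin n | (j : ℕ) < k} := by
  have hn : 0 < n := lt_of_lt_of_le hk1 hkn
  rcases eq_or_lt_of_le hk1 with h1 | h2
  · have hset : {j : Fin n | (j : ℕ) < k} = {(⟨0, hn⟩ : Fin n)} := by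
      ext j; simp [Fin.ext_iff]; omega
    rw [hset]
    exact singleton_genericPt (Or.inr (Or.inl ⟨_, rfl⟩))
  · have hk2 : 2 ≤ k := h2
    refine ⟨Or.inr (Or.inr ⟨k, hk2, hkn, rfl⟩), ⟨⟨0, hn⟩, by simp; omega⟩, ?_⟩
    rintro ⟨E, hEV, hEsub, ⟨p, hp⟩, hEun⟩
    rw [Set.mem_sInter] at hp
    set m : Fin n := ⟨k - 1, by omega⟩ with hm
    have key : ∀ A ∈ E, m ∈ A → A = {m} := by
      intro A hA hmA
      rcases hEV hA with h0 | ⟨x, hx⟩ | ⟨j, hj2, hjn, hAj⟩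
      · subst h0; exact absurd hmA (Set.notMem_empty m)
      · subst hx; rw [Set.mem_singleton_iff] at hmA; rw [hmA]
      · exfalso
        subst hAj
        have h5 : (m : ℕ) < j := hmA
        have h6 : {j' : Fin n | (j' : ℕ) < k} ⊆ {j' : Fin n | (j' : ℕ) < j} := by
          intro y hy; simp only [Set.mem_setOf_eq] at hy ⊢
          simp only [hm] at h5; omega
        exact (hEsub _ hA).not_subset h6
    have hmU : m ∈ ⋃₀ E := by rw [hEun]; simp only [Set.mem_setOf_eq, hm]; omega
    obtain ⟨A, hA, hmA⟩ := hmU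
    have hA1 := key A hA hmA
    have hpm : p = m := by
      have h := hp A hA
      rw [hA1] at h; exact h
    have hall : ∀ B ∈ E, B = {m} := fun B hB => key B hB (hpm ▸ hp B hB)
    have h0U : (⟨0, hn⟩ : Fin n) ∈ ⋃₀ E := by
      rw [hEun]; simp only [Set.mem_setOf_eq]; omega
    obtain ⟨B, hB, h0B⟩ := h0U
    rw [hall B hB, Set.mem_singleton_iff, Fin.ext_iff] at h0B
    simp only [hm] at h0B
    omega


/-- for a nonempty finite integral connectivity space with `n` points,
the index `ω(X)` is at most `n − 1`; `V_n` attains index `n − 1`, and any space with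
`n` points attaining index `n − 1` is isomorphic to `V_n`. -/
theorem index_le_card_and_Vn {X : Type*} [Finite X] (n : ℕ) (hn : 1 ≤ n)
    (hcard : Nat.card X = n) (κ : Set (Set X)) (hκ : IsIntConnStruct κ) :
    (∀ m : ℕ, DescChain κ m → m ≤ n - 1) ∧
    DescChain (Vstruct n) (n - 1) ∧
    (DescChain κ (n - 1) →
      ∃ e : X ≃ Fin n, ∀ s : Set X, s ∈ κ ↔ e '' s ∈ Vstruct n) := by
  refine ⟨?_, ?_, ?_⟩
  · rintro m ⟨c, hgen, hlt⟩
    have h1 := chain_ncard c hlt 0 ⟨m, lt_add_one m⟩ (by rw [Fin.le_def]; simp)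
    have h2 : 1 ≤ (c ⟨m, lt_add_one m⟩).ncard :=
      (Set.ncard_pos (Set.toFinite _)).mpr (hgen _).2.1
    have h3 : (c 0).ncard ≤ n := by
      have := Set.ncard_le_ncard (Set.subset_univ (c 0)) (Set.toFinite _)
      rwa [Set.ncard_univ, hcard] at this
    simp only [Fin.val_mk, Fin.val_zero] at h1
    omega
  · refine ⟨fun i => {j : Fin n | (j : ℕ) < n - (i : ℕ)}, fun i => ?_, fun i j hij => ?_⟩
    · have hi := i.isLt
      exact vstruct_generic (n - (i : ℕ)) (by omega) (by omega)
    · have hji : (i : ℕ) < (j : ℕ) := hij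
      have hj1 : (j : ℕ) ≤ n - 1 := Nat.lt_succ_iff.mp j.isLt
      constructor
      · intro y hy
        simp only [Set.mem_setOf_eq] at hy ⊢
        omega
      · intro hsub
        have hw : (⟨n - (j : ℕ), by omega⟩ : Fin n) ∈ {x : Fin n | (x : ℕ) < n - (i : ℕ)} := by
          simp only [Set.mem_setOf_eq, Fin.val_mk]
          omega
        have := hsub hw
        simp only [Set.mem_setOf_eq, Fin.val_mk] at this
        omega
  · rintro ⟨c0, hg0, hlt0⟩
    have hn' : n - 1 + 1 = n := by omega
    exact main3 n hn hcard κ hκ (fun i => c0 (Fin.cast hn'.symm i))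
      (fun i => hg0 _)
      (fun i j hij => hlt0 _ _ (by simp only [Fin.lt_def, Fin.coe_cast]; exact hij))
end
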